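/- A graph G satisfies core(G) = nucleus(G) if and only if core(G[L^c(G)]) = ∅ and diadem(G) = corona(G) ∩ L(G). -/
import Mathlib


open Finset

variable {V : Type*} [Fintype V] [DecidableEq V] (G : SimpleGraph V) [DecidableRel G.Adj]

/-- `N(S)`: the set of vertices adjacent to some vertex of `S`. -/
def nbhd (S : Finset V) : Finset V := S.biUnion (fun v => G.neighborFinset v)

/-- `S` is an independent set of `G`. -/
def Indep (S : Finset V) : Prop := ∀ u ∈ S, ∀ v ∈ S, ¬ G.Adj u v

/-- The difference `d_G(S) = |S| - |N(S)|`. -/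
def diffI (S : Finset V) : ℤ := (S.card : ℤ) - ((nbhd G S).card : ℤ)

/-- `S` is a maximum independent set of `G`. -/
def IsMaxIndep (S : Finset V) : Prop :=
  Indep G S ∧ ∀ T : Finset V, Indep G T → T.card ≤ S.card

/-- `I` is a critical independent set of `G`. -/
def IsCritIndep (I : Finset V) : Prop :=
  Indep G I ∧ ∀ J : Finset V, Indep G J → diffI G J ≤ diffI G I

/-- `I` is a maximum critical independent set of `G`. -/
def IsMaxCritIndep (I : Finset V) : Prop :=
  IsCritIndep G I ∧ ∀ J : Finset V, IsCritIndep G J → J.card ≤ I.card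

/-- `core(G)`: intersection of all maximum independent sets. -/
def core : Set V := {v | ∀ S : Finset V, IsMaxIndep G S → v ∈ S}

/-- `corona(G)`: union of all maximum independent sets. -/
def corona : Set V := {v | ∃ S : Finset V, IsMaxIndep G S ∧ v ∈ S}

/-- `nucleus(G)`: intersection of all maximum critical independent sets. -/
def nucleus : Set V := {v | ∀ S : Finset V, IsMaxCritIndep G S → v ∈ S}

/-- `diadem(G)`: union of all maximum critical independent sets. -/
def diadem : Set V := {v | ∃ S : Finset V, IsMaxCritIndep G S ∧ v ∈ S}

/-- `ker(G)`: intersection of all critical independent sets. -/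
def kerS : Set V := {v | ∀ S : Finset V, IsCritIndep G S → v ∈ S}

/-- A matching of `G`, given as an involution of the vertex set:
unmatched vertices are fixed points, matched vertices are sent to their partner. -/
def IsMatching (M : V → V) : Prop :=
  Function.Involutive M ∧ ∀ v, M v ≠ v → G.Adj v (M v)

/-- Twice the number of edges of the matching `M`, i.e. the number of matched vertices. -/
def matchSize (M : V → V) : ℕ := (univ.filter fun v => M v ≠ v).card

/-- `M` is a maximum matching of `G`. -/
def IsMaxMatching (M : V → V) : Prop :=
  IsMatching G M ∧ ∀ M' : V → V, IsMatching G M' → matchSize M' ≤ matchSize M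

/-- `M` is a matching of the induced subgraph `G[L]`. -/
def IsMatchingOn (L : Finset V) (M : V → V) : Prop :=
  IsMatching G M ∧ ∀ v, M v ≠ v → v ∈ L

/-- `M` is a maximum matching of the induced subgraph `G[L]`. -/
def IsMaxMatchingOn (L : Finset V) (M : V → V) : Prop :=
  IsMatchingOn G L M ∧ ∀ M' : V → V, IsMatchingOn G L M' → matchSize M' ≤ matchSize M

/-- `S` is a maximum independent set of the induced subgraph `G[L]`. -/
def IsMaxIndepOn (L : Finset V) (S : Finset V) : Prop :=
  S ⊆ L ∧ Indep G S ∧ ∀ T : Finset V, T ⊆ L → Indep G T → T.card ≤ S.card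

/-- `core` of the induced subgraph `G[L]`. -/
def coreOn (L : Finset V) : Set V := {v | ∀ S : Finset V, IsMaxIndepOn G L S → v ∈ S}

/-- `D(G[L])`: vertices of `L` missed by some maximum matching of `G[L]`. -/
def Dset (L : Finset V) : Set V := {v | v ∈ L ∧ ∃ M : V → V, IsMaxMatchingOn G L M ∧ M v = v}

/-- The Larson boundary `∂_L(G)` of the set `L`. -/
def boundaryL (L : Finset V) : Set V := {v | v ∈ L ∧ ∃ w, w ∉ L ∧ G.Adj v w}

/-- The critical difference `d(G)`. -/
noncomputable def critDiff : ℤ := sSup {d : ℤ | ∃ X : Finset V, diffI G X = d}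

/-- The difference of `S` computed in the induced subgraph `G[L]`. -/
def diffOn (L : Finset V) (S : Finset V) : ℤ := (S.card : ℤ) - ((nbhd G S ∩ L).card : ℤ)

/-- The critical difference of the induced subgraph `G[L]`. -/
noncomputable def critDiffOn (L : Finset V) : ℤ := sSup {d : ℤ | ∃ X : Finset V, X ⊆ L ∧ diffOn G L X = d}

/-- `G` is a König–Egerváry graph: `α(G) + μ(G) = |V(G)|`. -/
def KonigEgervary : Prop :=
  ∃ (S : Finset V) (M : V → V), IsMaxIndep G S ∧ IsMaxMatching G M ∧
    2 * S.card + matchSize M = 2 * Fintype.card V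

section Aux
set_option linter.unusedSectionVars false
variable {G}

/-! ### Basic facts about `nbhd` and `Indep` -/

lemma mem_nbhd {S : Finset V} {v : V} : v ∈ nbhd G S ↔ ∃ u ∈ S, G.Adj u v := by
  simp [nbhd, SimpleGraph.mem_neighborFinset]

lemma mem_nbhd_of_adj {S : Finset V} {u v : V} (hu : u ∈ S) (h : G.Adj u v) :
    v ∈ nbhd G S := mem_nbhd.2 ⟨u, hu, h⟩

lemma nbhd_mono {S T : Finset V} (h : S ⊆ T) : nbhd G S ⊆ nbhd G T := by
  intro x hx
  obtain ⟨u, hu, hadj⟩ := mem_nbhd.1 hx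
  exact mem_nbhd_of_adj (h hu) hadj

lemma nbhd_union (S T : Finset V) : nbhd G (S ∪ T) = nbhd G S ∪ nbhd G T := by
  ext x; simp [mem_nbhd, or_and_right, exists_or]

lemma nbhd_insert (v : V) (S : Finset V) :
    nbhd G (insert v S) = G.neighborFinset v ∪ nbhd G S := by
  ext x; simp [mem_nbhd, SimpleGraph.mem_neighborFinset]

lemma indep_subset {S T : Finset V} (h : T ⊆ S) (hS : Indep G S) : Indep G T :=
  fun u hu v hv => hS u (h hu) v (h hv)

lemma indep_sdiff_nbhd_self (X : Finset V) : Indep G (X \ nbhd G X) := by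
  intro u hu v hv hadj
  rcases mem_sdiff.1 hu with ⟨huX, _⟩
  rcases mem_sdiff.1 hv with ⟨_, hvn⟩
  exact hvn (mem_nbhd_of_adj huX hadj)

lemma indep_inter_nbhd_eq_empty {S : Finset V} (hS : Indep G S) : S ∩ nbhd G S = ∅ := by
  rw [eq_empty_iff_forall_notMem]
  intro x hx
  rcases mem_inter.1 hx with ⟨hx1, hx2⟩
  obtain ⟨u, hu, hadj⟩ := mem_nbhd.1 hx2
  exact hS u hu x hx1 hadj

lemma nbhd_sdiff_nbhd_inter (X : Finset V) : nbhd G (X \ nbhd G X) ∩ X = ∅ := by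
  rw [eq_empty_iff_forall_notMem]
  intro w hw
  rcases mem_inter.1 hw with ⟨hw1, hw2⟩
  obtain ⟨y, hy, hadj⟩ := mem_nbhd.1 hw1
  exact (mem_sdiff.1 hy).2 (mem_nbhd_of_adj hw2 hadj.symm)


lemma zhang {I : Finset V} (hI : IsCritIndep G I) (X : Finset V) :
    diffI G X ≤ diffI G I := by
  set Y := X \ nbhd G X with hY
  have hYindep : Indep G Y := indep_sdiff_nbhd_self X
  have h1 : Y.card + (X ∩ nbhd G X).card = X.card := card_sdiff_add_card_inter X (nbhd G X)
  have h2 : (nbhd G Y).card + (X ∩ nbhd G X).card ≤ (nbhd G X).card := by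
    have hsub : nbhd G Y ∪ X ∩ nbhd G X ⊆ nbhd G X := by
      apply union_subset (nbhd_mono sdiff_subset) inter_subset_right
    have hdisj : Disjoint (nbhd G Y) (X ∩ nbhd G X) := by
      rw [disjoint_iff_inter_eq_empty, eq_empty_iff_forall_notMem]
      intro w hw
      rcases mem_inter.1 hw with ⟨hw1, hw2⟩
      have : nbhd G Y ∩ X = ∅ := nbhd_sdiff_nbhd_inter X
      exact (eq_empty_iff_forall_notMem.1 this) w
        (mem_inter.2 ⟨hw1, (mem_inter.1 hw2).1⟩)
    calc (nbhd G Y).card + (X ∩ nbhd G X).card = (nbhd G Y ∪ X ∩ nbhd G X).card :=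
          (card_union_of_disjoint hdisj).symm
      _ ≤ (nbhd G X).card := card_le_card hsub
  have h3 : diffI G Y ≤ diffI G I := hI.2 Y hYindep
  unfold diffI at *
  omega

/-! ### Supermodularity -/

lemma supermod (A B : Finset V) :
    diffI G A + diffI G B ≤ diffI G (A ∪ B) + diffI G (A ∩ B) := by
  have hc : (A ∪ B).card + (A ∩ B).card = A.card + B.card := card_union_add_card_inter A B
  have hnu : nbhd G (A ∪ B) = nbhd G A ∪ nbhd G B := nbhd_union A B
  have hni : nbhd G (A ∩ B) ⊆ nbhd G A ∩ nbhd G B :=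
    subset_inter (nbhd_mono inter_subset_left) (nbhd_mono inter_subset_right)
  have h2 : (nbhd G (A ∪ B)).card + (nbhd G (A ∩ B)).card ≤
      (nbhd G A).card + (nbhd G B).card := by
    have := card_union_add_card_inter (nbhd G A) (nbhd G B)
    have h3 : (nbhd G (A ∩ B)).card ≤ (nbhd G A ∩ nbhd G B).card := card_le_card hni
    rw [hnu]; omega
  unfold diffI at *
  omega

/-! ### Hall's condition and a Hall injection for critical sets -/

lemma hall_cond {S : Finset V} (hS : IsCritIndep G S) {X : Finset V} (hX : X ⊆ nbhd G S) :
    X.card ≤ (nbhd G X ∩ S).card := by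
  set J := S \ nbhd G X with hJdef
  have hJindep : Indep G J := indep_subset sdiff_subset hS.1
  have hNJ : nbhd G J ⊆ nbhd G S \ X := by
    intro w hw
    obtain ⟨j, hj, hadj⟩ := mem_nbhd.1 hw
    rcases mem_sdiff.1 hj with ⟨hjS, hjn⟩
    refine mem_sdiff.2 ⟨mem_nbhd_of_adj hjS hadj, fun hwX => ?_⟩
    exact hjn (mem_nbhd_of_adj hwX hadj.symm)
  have h1 : J.card + (S ∩ nbhd G X).card = S.card := card_sdiff_add_card_inter S (nbhd G X)
  have h2 : (nbhd G J).card + X.card ≤ (nbhd G S).card := by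
    have := card_le_card hNJ
    have := card_sdiff_of_subset hX
    have := card_le_card hX
    omega
  have h3 : diffI G J ≤ diffI G S := hS.2 J hJindep
  have h4 : (S ∩ nbhd G X).card = (nbhd G X ∩ S).card := by rw [inter_comm]
  unfold diffI at h3
  zify at h1 h2 ⊢
  rw [h4] at h1
  linarith

lemma hall_inj {S : Finset V} (hS : IsCritIndep G S) :
    ∃ f : V → V, (∀ x ∈ nbhd G S, f x ∈ S ∧ G.Adj x (f x)) ∧
      (∀ x ∈ nbhd G S, ∀ y ∈ nbhd G S, f x = f y → x = y) := by
  have key : ∀ s : Finset {x : V // x ∈ nbhd G S},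
      s.card ≤ (s.biUnion fun x => G.neighborFinset x.1 ∩ S).card := by
    intro s
    set X := s.image Subtype.val with hXdef
    have hXcard : X.card = s.card := card_image_of_injective s Subtype.val_injective
    have hXsub : X ⊆ nbhd G S := by
      intro x hx
      obtain ⟨⟨y, hy⟩, _, rfl⟩ := mem_image.1 hx
      exact hy
    have heq : s.biUnion (fun x => G.neighborFinset x.1 ∩ S) = nbhd G X ∩ S := by
      ext w
      simp only [mem_biUnion, mem_inter, mem_nbhd, SimpleGraph.mem_neighborFinset, hXdef,
        mem_image]
      constructor
      · rintro ⟨x, hx, hadj, hwS⟩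
        exact ⟨⟨x.1, ⟨x, hx, rfl⟩, hadj⟩, hwS⟩
      · rintro ⟨⟨u, ⟨x, hx, rfl⟩, hadj⟩, hwS⟩
        exact ⟨x, hx, hadj, hwS⟩
    rw [heq, ← hXcard]
    exact hall_cond hS hXsub
  obtain ⟨f₀, hf₀inj, hf₀mem⟩ :=
    (Finset.all_card_le_biUnion_card_iff_exists_injective _).1 key
  classical
  refine ⟨fun x => if h : x ∈ nbhd G S then f₀ ⟨x, h⟩ else x, ?_, ?_⟩
  · intro x hx
    dsimp only
    rw [dif_pos hx]
    have := hf₀mem ⟨x, hx⟩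
    rw [mem_inter, SimpleGraph.mem_neighborFinset] at this
    exact ⟨this.2, this.1⟩
  · intro x hx y hy hxy
    dsimp only at hxy
    rw [dif_pos hx, dif_pos hy] at hxy
    exact congrArg Subtype.val (hf₀inj hxy)

/-- Any independent subset of `N[I]` has at most `|I|` elements, for critical `I`. -/
lemma card_indep_le {I : Finset V} (hI : IsCritIndep G I) {T : Finset V}
    (hT : Indep G T) (hTL : T ⊆ I ∪ nbhd G I) : T.card ≤ I.card := by
  obtain ⟨f, hfmem, hfinj⟩ := hall_inj hI
  classical
  apply card_le_card_of_injOn (fun t => if t ∈ I then t else f t)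
  · intro t ht
    by_cases h : t ∈ I
    · simpa [h]
    · have htn : t ∈ nbhd G I := (mem_union.1 (hTL ht)).resolve_left h
      simp only [if_neg h]
      exact (hfmem t htn).1
  · intro t1 ht1 t2 ht2 heq
    simp only at heq
    by_cases h1 : t1 ∈ I <;> by_cases h2 : t2 ∈ I
    · simpa [h1, h2] using heq
    · exfalso
      have ht2n : t2 ∈ nbhd G I := (mem_union.1 (hTL ht2)).resolve_left h2
      rw [if_pos h1, if_neg h2] at heq
      exact hT t2 ht2 t1 ht1 (heq ▸ (hfmem t2 ht2n).2)
    · exfalso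
      have ht1n : t1 ∈ nbhd G I := (mem_union.1 (hTL ht1)).resolve_left h1
      rw [if_neg h1, if_pos h2] at heq
      exact hT t1 ht1 t2 ht2 (heq ▸ (hfmem t1 ht1n).2)
    · have ht1n : t1 ∈ nbhd G I := (mem_union.1 (hTL ht1)).resolve_left h1
      have ht2n : t2 ∈ nbhd G I := (mem_union.1 (hTL ht2)).resolve_left h2
      rw [if_neg h1, if_neg h2] at heq
      exact hfinj t1 ht1n t2 ht2n heq

/-! ### Relative Zhang lemma on `L = N[I]` -/

lemma rel_zhang_indep {I : Finset V} (hI : IsCritIndep G I) {Y : Finset V}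
    (hY : Indep G Y) (hYL : Y ⊆ I ∪ nbhd G I) :
    (Y.card : ℤ) ≤ ((nbhd G Y ∩ (I ∪ nbhd G I)).card : ℤ) + diffI G I := by
  classical
  obtain ⟨f, hfmem, hfinj⟩ := hall_inj hI
  set L := I ∪ nbhd G I with hL
  set P := nbhd G Y ∩ L with hP
  set W := (nbhd G I).filter (fun w => f w ∈ Y) with hW
  set U := (nbhd G I).image f with hU
  have hIdisj : I ∩ nbhd G I = ∅ := indep_inter_nbhd_eq_empty hI.1
  have hUsub : U ⊆ I := by
    intro x hx
    obtain ⟨w, hw, rfl⟩ := mem_image.1 hx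
    exact (hfmem w hw).1
  have e4 : (Y ∩ I).card + (Y ∩ nbhd G I).card = Y.card := by
    have hdisj : Disjoint (Y ∩ I) (Y ∩ nbhd G I) := by
      rw [disjoint_left]
      intro x hx1 hx2
      have : x ∈ I ∩ nbhd G I := mem_inter.2 ⟨(mem_inter.1 hx1).2, (mem_inter.1 hx2).2⟩
      simp [hIdisj] at this
    rw [← card_union_of_disjoint hdisj, ← inter_union_distrib_left,
      inter_eq_left.2 hYL]
  have claim1 : Y ∩ I ⊆ W.image f ∪ (I \ U) := by
    intro y hy
    rcases mem_inter.1 hy with ⟨hyY, hyI⟩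
    by_cases h : y ∈ U
    · obtain ⟨w, hw, rfl⟩ := mem_image.1 h
      exact mem_union_left _ (mem_image.2 ⟨w, mem_filter.2 ⟨hw, hyY⟩, rfl⟩)
    · exact mem_union_right _ (mem_sdiff.2 ⟨hyI, h⟩)
  have e1 : (Y ∩ I).card ≤ W.card + (I \ U).card := by
    calc (Y ∩ I).card ≤ (W.image f ∪ (I \ U)).card := card_le_card claim1
      _ ≤ (W.image f).card + (I \ U).card := card_union_le _ _
      _ ≤ W.card + (I \ U).card := by
          exact Nat.add_le_add_right (card_image_le) _
  have e2 : (I \ U).card + (nbhd G I).card = I.card := by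
    have hUcard : U.card = (nbhd G I).card :=
      card_image_of_injOn (fun x hx y hy => hfinj x hx y hy)
    have := card_sdiff_of_subset hUsub
    have := card_le_card hUsub
    omega
  have hWP : W ⊆ P := by
    intro w hw
    rcases mem_filter.1 hw with ⟨hwN, hwY⟩
    refine mem_inter.2 ⟨mem_nbhd_of_adj hwY (hfmem w hwN).2.symm, mem_union_right _ hwN⟩
  have e3 : (Y ∩ nbhd G I).card + W.card ≤ P.card := by
    have hinj : (Y ∩ nbhd G I).card ≤ (P \ W).card := by
      apply card_le_card_of_injOn f
      · intro y hy
        rcases mem_inter.1 hy with ⟨hyY, hyN⟩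
        refine mem_sdiff.2 ⟨mem_inter.2 ⟨mem_nbhd_of_adj hyY (hfmem y hyN).2,
          mem_union_left _ (hfmem y hyN).1⟩, fun hfW => ?_⟩
        have : f y ∈ I ∩ nbhd G I :=
          mem_inter.2 ⟨(hfmem y hyN).1, (mem_filter.1 hfW).1⟩
        simp [hIdisj] at this
      · intro y1 hy1 y2 hy2 heq
        exact hfinj y1 (mem_inter.1 hy1).2 y2 (mem_inter.1 hy2).2 heq
    have := card_sdiff_add_card_eq_card hWP
    omega
  unfold diffI
  push_cast
  omega

lemma rel_zhang {I : Finset V} (hI : IsCritIndep G I) {X : Finset V}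
    (hX : X ⊆ I ∪ nbhd G I) :
    (X.card : ℤ) - ((nbhd G X ∩ (I ∪ nbhd G I)).card : ℤ) ≤ diffI G I := by
  set L := I ∪ nbhd G I with hL
  set Y := X \ nbhd G X with hY
  have hYindep : Indep G Y := indep_sdiff_nbhd_self X
  have hYL : Y ⊆ L := sdiff_subset.trans hX
  have ha := rel_zhang_indep hI hYindep hYL
  rw [← hL] at ha
  have h1 : Y.card + (X ∩ nbhd G X).card = X.card := card_sdiff_add_card_inter X (nbhd G X)
  have h2 : (nbhd G Y ∩ L).card + (X ∩ nbhd G X).card ≤ (nbhd G X ∩ L).card := by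
    have hsub : (nbhd G Y ∩ L) ∪ (X ∩ nbhd G X) ⊆ nbhd G X ∩ L := by
      apply union_subset
      · exact inter_subset_inter_right (nbhd_mono sdiff_subset)
      · intro x hx
        rcases mem_inter.1 hx with ⟨hx1, hx2⟩
        exact mem_inter.2 ⟨hx2, hX hx1⟩
    have hdisj : Disjoint (nbhd G Y ∩ L) (X ∩ nbhd G X) := by
      rw [disjoint_left]
      intro x hx1 hx2
      have hempty := nbhd_sdiff_nbhd_inter (G := G) X
      exact (eq_empty_iff_forall_notMem.1 hempty) x
        (mem_inter.2 ⟨(mem_inter.1 hx1).1, (mem_inter.1 hx2).1⟩)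
    calc (nbhd G Y ∩ L).card + (X ∩ nbhd G X).card
        = ((nbhd G Y ∩ L) ∪ (X ∩ nbhd G X)).card := (card_union_of_disjoint hdisj).symm
      _ ≤ (nbhd G X ∩ L).card := card_le_card hsub
  omega

/-! ### Every critical independent set lies in `L` -/

lemma crit_subset {I : Finset V} (hI : IsMaxCritIndep G I) {J : Finset V}
    (hJ : IsCritIndep G J) : J ⊆ I ∪ nbhd G I := by
  classical
  set L := I ∪ nbhd G I with hL
  set J2 := J \ L with hJ2
  set X₀ := J ∩ nbhd G I with hX₀
  set T := I ∪ J2 with hT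
  set U := I ∪ J with hU
  have hIdisj : I ∩ nbhd G I = ∅ := indep_inter_nbhd_eq_empty hI.1.1
  have hdJI : diffI G J = diffI G I :=
    le_antisymm (hI.1.2 J hJ.1) (hJ.2 I hI.1.1)
  have hIJint : diffI G (I ∩ J) ≤ diffI G I :=
    hI.1.2 _ (indep_subset inter_subset_left hI.1.1)
  have hUd : diffI G I ≤ diffI G U := by
    have := supermod (G := G) I J
    rw [← hU] at this
    linarith
  have hTindep : Indep G T := by
    intro u hu v hv hadj
    rcases mem_union.1 hu with hu1 | hu2 <;> rcases mem_union.1 hv with hv1 | hv2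
    · exact hI.1.1 u hu1 v hv1 hadj
    · exact (mem_sdiff.1 hv2).2 (mem_union_right _ (mem_nbhd_of_adj hu1 hadj))
    · exact (mem_sdiff.1 hu2).2 (mem_union_right _ (mem_nbhd_of_adj hv1 hadj.symm))
    · exact hJ.1 u (mem_sdiff.1 hu2).1 v (mem_sdiff.1 hv2).1 hadj
  have hdisjIJ2 : Disjoint I J2 := by
    rw [disjoint_left]
    intro x hx1 hx2
    exact (mem_sdiff.1 hx2).2 (mem_union_left _ hx1)
  have hsplit : J \ I = J2 ∪ X₀ := by
    ext j
    simp only [hJ2, hX₀, mem_sdiff, mem_union, mem_inter, hL]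
    constructor
    · rintro ⟨hjJ, hjI⟩
      by_cases h : j ∈ nbhd G I
      · exact Or.inr ⟨hjJ, h⟩
      · exact Or.inl ⟨hjJ, fun hc => hc.elim hjI h⟩
    · rintro (⟨hjJ, hjL⟩ | ⟨hjJ, hjN⟩)
      · exact ⟨hjJ, fun h => hjL (Or.inl h)⟩
      · refine ⟨hjJ, fun h => ?_⟩
        have : j ∈ I ∩ nbhd G I := mem_inter.2 ⟨h, hjN⟩
        simp [hIdisj] at this
  have hdisjJ2X₀ : Disjoint J2 X₀ := by
    rw [disjoint_left]
    intro x hx1 hx2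
    exact (mem_sdiff.1 hx1).2 (mem_union_right _ (mem_inter.1 hx2).2)
  have cardT : T.card + X₀.card = U.card := by
    have h1 : T.card = I.card + J2.card :=
      card_union_of_disjoint hdisjIJ2
    have h2 : U.card = I.card + (J \ I).card := by
      rw [hU, ← union_sdiff_self_eq_union]
      exact card_union_of_disjoint disjoint_sdiff
    have h3 : (J \ I).card = J2.card + X₀.card := by
      rw [hsplit]; exact card_union_of_disjoint hdisjJ2X₀
    omega
  have cardN : (nbhd G T).card + X₀.card ≤ (nbhd G U).card := by
    have hhall : X₀.card ≤ (nbhd G X₀ ∩ I).card := hall_cond hI.1 inter_subset_right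
    have hsub : nbhd G T ∪ (nbhd G X₀ ∩ I) ⊆ nbhd G U := by
      apply union_subset
      · exact nbhd_mono (union_subset_union_right (sdiff_subset))
      · exact (inter_subset_left).trans
          ((nbhd_mono inter_subset_left).trans (nbhd_mono subset_union_right))
    have hdisj : Disjoint (nbhd G T) (nbhd G X₀ ∩ I) := by
      rw [disjoint_left]
      intro x hx1 hx2
      have hxI : x ∈ I := (mem_inter.1 hx2).2
      rw [hT, nbhd_union] at hx1
      rcases mem_union.1 hx1 with h | h
      · have : x ∈ I ∩ nbhd G I := mem_inter.2 ⟨hxI, h⟩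
        simp [hIdisj] at this
      · obtain ⟨j, hj, hadj⟩ := mem_nbhd.1 h
        exact (mem_sdiff.1 hj).2 (mem_union_right _ (mem_nbhd_of_adj hxI hadj.symm))
    calc (nbhd G T).card + X₀.card ≤ (nbhd G T).card + (nbhd G X₀ ∩ I).card := by omega
      _ = (nbhd G T ∪ (nbhd G X₀ ∩ I)).card := (card_union_of_disjoint hdisj).symm
      _ ≤ (nbhd G U).card := card_le_card hsub
  have hdT : diffI G I ≤ diffI G T := by
    have : diffI G U ≤ diffI G T := by
      unfold diffI
      push_cast
      omega
    linarith
  have hTcrit : IsCritIndep G T :=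
    ⟨hTindep, fun J' hJ' => le_trans (hI.1.2 J' hJ') hdT⟩
  have hcard : T.card ≤ I.card := hI.2 T hTcrit
  have hcardT : T.card = I.card + J2.card := card_union_of_disjoint hdisjIJ2
  have : J2 = ∅ := card_eq_zero.1 (by omega)
  rw [hJ2] at this
  exact sdiff_eq_empty_iff_subset.1 this

/-! ### Maximum critical independent sets: invariance of `N[J]` -/

lemma mcis_card_eq {I J : Finset V} (hI : IsMaxCritIndep G I) (hJ : IsMaxCritIndep G J) :
    J.card = I.card := le_antisymm (hI.2 J hJ.1) (hJ.2 I hI.1)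

lemma mcis_diff_eq {I J : Finset V} (hI : IsMaxCritIndep G I) (hJ : IsMaxCritIndep G J) :
    diffI G J = diffI G I := le_antisymm (hI.1.2 J hJ.1.1) (hJ.1.2 I hI.1.1)

lemma mcis_nbhd_subset {I J : Finset V} (hI : IsMaxCritIndep G I) (hJ : IsMaxCritIndep G J) :
    nbhd G J ⊆ I ∪ nbhd G I := by
  have hJL : J ⊆ I ∪ nbhd G I := crit_subset hI hJ.1
  have h := rel_zhang hI.1 hJL
  have hdeq : diffI G J = diffI G I := mcis_diff_eq hI hJ
  unfold diffI at hdeq h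
  have hsub : nbhd G J ∩ (I ∪ nbhd G I) ⊆ nbhd G J := inter_subset_left
  have hcard : (nbhd G J).card ≤ (nbhd G J ∩ (I ∪ nbhd G I)).card := by omega
  have := eq_of_subset_of_card_le hsub hcard
  exact inter_eq_left.1 this

lemma card_closed {S : Finset V} (hS : Indep G S) :
    (S ∪ nbhd G S).card = S.card + (nbhd G S).card := by
  apply card_union_of_disjoint
  rw [disjoint_left]
  intro x hx1 hx2
  exact (eq_empty_iff_forall_notMem.1 (indep_inter_nbhd_eq_empty hS)) x (mem_inter.2 ⟨hx1, hx2⟩)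

lemma mcis_nbhd_card {I J : Finset V} (hI : IsMaxCritIndep G I) (hJ : IsMaxCritIndep G J) :
    (nbhd G J).card = (nbhd G I).card := by
  have h1 := mcis_card_eq hI hJ
  have h2 := mcis_diff_eq hI hJ
  unfold diffI at h2
  omega

lemma mcis_closed {I J : Finset V} (hI : IsMaxCritIndep G I) (hJ : IsMaxCritIndep G J) :
    J ∪ nbhd G J = I ∪ nbhd G I := by
  apply eq_of_subset_of_card_le
    (union_subset (crit_subset hI hJ.1) (mcis_nbhd_subset hI hJ))
  rw [card_closed hI.1.1, card_closed hJ.1.1, mcis_card_eq hI hJ, mcis_nbhd_card hI hJ]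

/-! ### Existence of maximum independent sets -/

lemma exists_maxIndepOn (L' : Finset V) : ∃ B, IsMaxIndepOn G L' B := by
  classical
  set s := L'.powerset.filter (fun S => Indep G S) with hs
  have hne : s.Nonempty :=
    ⟨∅, mem_filter.2 ⟨mem_powerset.2 (empty_subset _), fun u hu => absurd hu (notMem_empty u)⟩⟩
  obtain ⟨B, hBs, hBmax⟩ := s.exists_max_image Finset.card hne
  rcases mem_filter.1 hBs with ⟨hBsub, hBind⟩
  exact ⟨B, mem_powerset.1 hBsub, hBind, fun T hTsub hTind =>
    hBmax T (mem_filter.2 ⟨mem_powerset.2 hTsub, hTind⟩)⟩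

lemma exists_maxIndep : ∃ A, IsMaxIndep G A := by
  obtain ⟨A, hA⟩ := exists_maxIndepOn (G := G) univ
  exact ⟨A, hA.2.1, fun T hT => hA.2.2 T (subset_univ T) hT⟩

/-! ### The decomposition `α(G) = |I| + α(G - N[I])` -/

lemma card_inter_partition (L' T : Finset V) :
    (T ∩ L').card + (T ∩ (univ \ L')).card = T.card := by
  have hdisj : Disjoint (T ∩ L') (T ∩ (univ \ L')) := by
    rw [disjoint_left]
    intro x hx1 hx2
    exact (mem_sdiff.1 (mem_inter.1 hx2).2).2 (mem_inter.1 hx1).2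
  rw [← card_union_of_disjoint hdisj, ← inter_union_distrib_left]
  congr 1
  rw [inter_eq_left]
  intro x _
  by_cases h : x ∈ L'
  · exact mem_union_left _ h
  · exact mem_union_right _ (mem_sdiff.2 ⟨mem_univ x, h⟩)

lemma union_maxIndep {I J : Finset V} (hI : IsMaxCritIndep G I) (hJ : IsMaxCritIndep G J)
    {B : Finset V} (hB : IsMaxIndepOn G (univ \ (I ∪ nbhd G I)) B) :
    IsMaxIndep G (J ∪ B) := by
  have hBLc : ∀ b ∈ B, b ∉ I ∪ nbhd G I := fun b hb => (mem_sdiff.1 (hB.1 hb)).2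
  have hJL : J ⊆ I ∪ nbhd G I := crit_subset hI hJ.1
  have hNJ : nbhd G J ⊆ I ∪ nbhd G I := mcis_nbhd_subset hI hJ
  constructor
  · intro u hu v hv hadj
    rcases mem_union.1 hu with hu1 | hu2 <;> rcases mem_union.1 hv with hv1 | hv2
    · exact hJ.1.1 u hu1 v hv1 hadj
    · exact hBLc v hv2 (hNJ (mem_nbhd_of_adj hu1 hadj))
    · exact hBLc u hu2 (hNJ (mem_nbhd_of_adj hv1 hadj.symm))
    · exact hB.2.1 u hu2 v hv2 hadj
  · intro T hT
    have cT := card_inter_partition (I ∪ nbhd G I) T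
    have c1 : (T ∩ (I ∪ nbhd G I)).card ≤ I.card :=
      card_indep_le hI.1 (indep_subset inter_subset_left hT) inter_subset_right
    have c2 : (T ∩ (univ \ (I ∪ nbhd G I))).card ≤ B.card :=
      hB.2.2 _ inter_subset_right (indep_subset inter_subset_left hT)
    have cJB : (J ∪ B).card = J.card + B.card := by
      apply card_union_of_disjoint
      rw [disjoint_left]
      intro x hx1 hx2
      exact hBLc x hx2 (hJL hx1)
    have cJ : J.card = I.card := mcis_card_eq hI hJ
    omega

lemma maxIndep_parts {I : Finset V} (hI : IsMaxCritIndep G I) {B : Finset V}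
    (hB : IsMaxIndepOn G (univ \ (I ∪ nbhd G I)) B) {A : Finset V} (hA : IsMaxIndep G A) :
    (A ∩ (I ∪ nbhd G I)).card = I.card ∧
      IsMaxIndepOn G (univ \ (I ∪ nbhd G I)) (A ∩ (univ \ (I ∪ nbhd G I))) := by
  have hIB : IsMaxIndep G (I ∪ B) := union_maxIndep hI hI hB
  have hIBcard : (I ∪ B).card = I.card + B.card := by
    apply card_union_of_disjoint
    rw [disjoint_left]
    intro x hx1 hx2
    exact (mem_sdiff.1 (hB.1 hx2)).2 (mem_union_left _ hx1)
  have hAcard : I.card + B.card ≤ A.card := hIBcard ▸ hA.2 (I ∪ B) hIB.1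
  have cA := card_inter_partition (I ∪ nbhd G I) A
  have c1 : (A ∩ (I ∪ nbhd G I)).card ≤ I.card :=
    card_indep_le hI.1 (indep_subset inter_subset_left hA.1) inter_subset_right
  have c2 : (A ∩ (univ \ (I ∪ nbhd G I))).card ≤ B.card :=
    hB.2.2 _ inter_subset_right (indep_subset inter_subset_left hA.1)
  have hBeq : (A ∩ (univ \ (I ∪ nbhd G I))).card = B.card := by omega
  refine ⟨by omega, inter_subset_right, indep_subset inter_subset_left hA.1,
    fun T hTsub hTind => ?_⟩
  rw [hBeq]
  exact hB.2.2 T hTsub hTind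

/-! ### The union of all maximum critical independent sets has difference `d(G)` -/

lemma diff_biUnion {I : Finset V} (hIc : IsCritIndep G I) (F' : Finset (Finset V)) :
    (∀ S ∈ F', Indep G S ∧ diffI G S = diffI G I) → F'.Nonempty →
    diffI G (F'.biUnion id) = diffI G I := by
  classical
  induction F' using Finset.induction_on with
  | empty => rintro - ⟨x, hx⟩; exact absurd hx (notMem_empty x)
  | @insert a s hnm ih =>
    intro hall hne
    rw [biUnion_insert]
    simp only [id_eq]
    by_cases hs : s.Nonempty
    · have hU := ih (fun S hS => hall S (mem_insert_of_mem hS)) hs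
      have ha := hall a (mem_insert_self a s)
      have h1 := supermod (G := G) a (s.biUnion id)
      have h2 := zhang hIc (a ∪ s.biUnion id)
      have h3 := zhang hIc (a ∩ s.biUnion id)
      exact le_antisymm h2 (by linarith [ha.2, hU])
    · rw [not_nonempty_iff_eq_empty] at hs
      subst hs
      simpa using (hall a (mem_insert_self a _)).2

/-! ### The key lemma: a vertex of `L` missed by every maximum critical independent
set has a neighbour lying in all of them -/

lemma star_lemma {I : Finset V} (hI : IsMaxCritIndep G I) {v : V}
    (hv : v ∈ I ∪ nbhd G I) (hnv : ∀ J, IsMaxCritIndep G J → v ∉ J) :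
    ∃ u, G.Adj v u ∧ ∀ J, IsMaxCritIndep G J → u ∈ J := by
  classical
  set L := I ∪ nbhd G I with hL
  set F := (univ : Finset (Finset V)).filter (fun S => IsMaxCritIndep G S) with hF
  set D := F.biUnion id with hD
  have hmemF : ∀ S, S ∈ F ↔ IsMaxCritIndep G S := fun S => by simp [hF]
  have hIF : I ∈ F := (hmemF I).2 hI
  have hDd : diffI G D = diffI G I := diff_biUnion hI.1 F
      (fun S hS => ⟨((hmemF S).1 hS).1.1, mcis_diff_eq hI ((hmemF S).1 hS)⟩) ⟨I, hIF⟩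
  have hDL : D ⊆ L := by
    intro x hx
    obtain ⟨S, hS, hxS⟩ := mem_biUnion.1 hx
    exact crit_subset hI ((hmemF S).1 hS).1 hxS
  have hvD : v ∉ D := by
    intro hx
    obtain ⟨S, hS, hxS⟩ := mem_biUnion.1 hx
    exact hnv S ((hmemF S).1 hS) hxS
  by_contra hcon
  push_neg at hcon
  have hXL : insert v D ⊆ L := insert_subset hv hDL
  have hzh := rel_zhang hI.1 hXL
  rw [← hL] at hzh
  have hcard := card_insert_of_notMem hvD
  have hsub : nbhd G (insert v D) ∩ L ⊆ nbhd G D := by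
    intro w hw
    rcases mem_inter.1 hw with ⟨hw1, hwL⟩
    rw [nbhd_insert] at hw1
    rcases mem_union.1 hw1 with h | h
    · have hadj : G.Adj v w := (SimpleGraph.mem_neighborFinset _ _ _).1 h
      obtain ⟨J, hJ, hwJ⟩ := hcon w hadj
      have hwc : w ∈ J ∪ nbhd G J := by
        rw [mcis_closed hI hJ, ← hL]
        exact hwL
      have hwn : w ∈ nbhd G J := (mem_union.1 hwc).resolve_left hwJ
      exact nbhd_mono (fun x hx => mem_biUnion.2 ⟨J, (hmemF J).2 hJ, hx⟩) hwn
    · exact h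
  have h1 : (nbhd G (insert v D) ∩ L).card ≤ (nbhd G D).card := card_le_card hsub
  unfold diffI at hDd hzh
  omega

/-- If `diadem G = corona G ∩ L`, then for every maximum independent set `A`,
the set `A ∩ L` is a maximum critical independent set. -/
lemma maxIndep_inter_mcis {I : Finset V} (hI : IsMaxCritIndep G I) {B : Finset V}
    (hB : IsMaxIndepOn G (univ \ (I ∪ nbhd G I)) B) {A : Finset V} (hA : IsMaxIndep G A)
    (hmem : ∀ w ∈ A ∩ (I ∪ nbhd G I), ∃ J, IsMaxCritIndep G J ∧ w ∈ J) :
    IsMaxCritIndep G (A ∩ (I ∪ nbhd G I)) := by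
  classical
  set L := I ∪ nbhd G I with hL
  have hcard : (A ∩ L).card = I.card := (maxIndep_parts hI hB hA).1
  have hindep : Indep G (A ∩ L) := indep_subset inter_subset_left hA.1
  have hNL : nbhd G (A ∩ L) ⊆ L := by
    intro x hx
    obtain ⟨w, hw, hadj⟩ := mem_nbhd.1 hx
    obtain ⟨J, hJ, hwJ⟩ := hmem w hw
    have : x ∈ nbhd G J := mem_nbhd_of_adj hwJ hadj
    rw [hL]
    exact mcis_nbhd_subset hI hJ this
  have hNsub : nbhd G (A ∩ L) ⊆ L \ (A ∩ L) := by
    intro x hx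
    refine mem_sdiff.2 ⟨hNL hx, fun hxA => ?_⟩
    obtain ⟨w, hw, hadj⟩ := mem_nbhd.1 hx
    exact hA.1 w (mem_inter.1 hw).1 x (mem_inter.1 hxA).1 hadj
  have hNcard : (nbhd G (A ∩ L)).card ≤ (nbhd G I).card := by
    have h1 : (L \ (A ∩ L)).card = L.card - (A ∩ L).card :=
      card_sdiff_of_subset inter_subset_right
    have h2 : L.card = I.card + (nbhd G I).card := card_closed hI.1.1
    have h3 := card_le_card hNsub
    omega
  have hdge : diffI G I ≤ diffI G (A ∩ L) := by
    unfold diffI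
    have h2 : (A ∩ L).card = I.card := hcard
    push_cast
    omega
  have hcrit : IsCritIndep G (A ∩ L) :=
    ⟨hindep, fun J' hJ' => le_trans (hI.1.2 J' hJ') hdge⟩
  exact ⟨hcrit, fun J' hJ' => (hI.2 J' hJ').trans_eq hcard.symm⟩

end Aux

theorem stmt16 (I : Finset V) (hI : IsMaxCritIndep G I) :
    core G = nucleus G ↔
      (coreOn G (univ \ (I ∪ nbhd G I)) = ∅ ∧
        diadem G = corona G ∩ ↑(I ∪ nbhd G I)) := by
  classical
  obtain ⟨B, hB⟩ := exists_maxIndepOn (G := G) (univ \ (I ∪ nbhd G I))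
  constructor
  · intro hcn
    constructor
    · -- `coreOn G Lc = ∅`
      rw [Set.eq_empty_iff_forall_notMem]
      intro v hv
      have hvLc : v ∈ univ \ (I ∪ nbhd G I) := hB.1 (hv B hB)
      have hvcore : v ∈ core G := by
        intro A hA
        exact mem_of_mem_inter_left (hv _ (maxIndep_parts hI hB hA).2)
      have hvI : v ∈ I := (hcn ▸ hvcore) I hI
      exact (mem_sdiff.1 hvLc).2 (mem_union_left _ hvI)
    · -- `diadem G = corona G ∩ L`
      ext v
      simp only [Set.mem_inter_iff, Finset.mem_coe]
      constructor
      · rintro ⟨J, hJ, hvJ⟩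
        exact ⟨⟨J ∪ B, union_maxIndep hI hJ hB, mem_union_left _ hvJ⟩,
          crit_subset hI hJ.1 hvJ⟩
      · rintro ⟨⟨A, hA, hvA⟩, hvL⟩
        by_contra hnd
        have hnv : ∀ J, IsMaxCritIndep G J → v ∉ J := fun J hJ hvJ => hnd ⟨J, hJ, hvJ⟩
        obtain ⟨u, hadj, hu⟩ := star_lemma hI hvL hnv
        have hucore : u ∈ core G := hcn ▸ (fun S hS => hu S hS)
        exact hA.1 v hvA u (hucore A hA) hadj
  · rintro ⟨h1, h2⟩
    apply Set.Subset.antisymm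
    · -- core ⊆ nucleus
      intro v hv J hJ
      have hvJB : v ∈ J ∪ B := hv _ (union_maxIndep hI hJ hB)
      rcases mem_union.1 hvJB with h | h
      · exact h
      · exfalso
        have hvLc : v ∈ univ \ (I ∪ nbhd G I) := hB.1 h
        have hvon : v ∈ coreOn G (univ \ (I ∪ nbhd G I)) := by
          intro S hS
          rcases mem_union.1 (hv _ (union_maxIndep hI hI hS)) with h' | h'
          · exact absurd (mem_union_left _ h') (mem_sdiff.1 hvLc).2
          · exact h'
        rw [h1] at hvon
        exact hvon
    · -- nucleus ⊆ core
      intro v hv A hA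
      have hmem : ∀ w ∈ A ∩ (I ∪ nbhd G I), ∃ J, IsMaxCritIndep G J ∧ w ∈ J := by
        intro w hw
        rcases mem_inter.1 hw with ⟨hwA, hwL⟩
        have : w ∈ diadem G := by
          rw [h2]
          exact ⟨⟨A, hA, hwA⟩, hwL⟩
        exact this
      have hmcis := maxIndep_inter_mcis hI hB hA hmem
      exact mem_of_mem_inter_left (hv _ hmcis)
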